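/- The mutual information of the Z-channel with parameter ε, given by f(p) = H₂(pε) - p H₂(ε), is maximized over p ∈ [0,1] at p_ε = γ/(1 + εγ), where γ = (1-ε)^{(1-ε)/ε}. -/

import Mathlib

open Real Set

noncomputable def H2 (x : ℝ) : ℝ := -(x * Real.logb 2 x) - (1 - x) * Real.logb 2 (1 - x)

lemma H2_eq (x : ℝ) : H2 x = Real.binEntropy x / Real.log 2 := by
  unfold H2 Real.binEntropy Real.logb
  rw [Real.log_inv, Real.log_inv]
  ring

/-- The mutual information of the Z-channel with parameter `ε`,
`f(p) = H₂(pε) - p H₂(ε)`, is maximized over `p ∈ [0,1]` at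
`p_ε = γ/(1+εγ)` with `γ = (1-ε)^((1-ε)/ε)`. -/
theorem zchannel_mutualInfo_maximizer (ε : ℝ) (hε : ε ∈ Set.Ioo (0:ℝ) 1) :
    let γ : ℝ := (1 - ε) ^ ((1 - ε) / ε)
    let pε : ℝ := γ / (1 + ε * γ)
    pε ∈ Set.Icc (0:ℝ) 1 ∧
      IsMaxOn (fun p : ℝ => H2 (p * ε) - p * H2 ε) (Set.Icc (0:ℝ) 1) pε := by
  intro γ pε
  obtain ⟨hε0, hε1⟩ := hε
  have h1ε : (0:ℝ) < 1 - ε := by linarith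
  have hγ : 0 < γ := Real.rpow_pos_of_pos h1ε _
  have hden : 0 < 1 + ε * γ := by positivity
  have hp0 : 0 < pε := div_pos hγ hden
  -- pε < 1 : γ(1-ε) < 1 since (1-ε)^(1/ε) < 1
  have hγ1 : γ * (1 - ε) < 1 := by
    have : γ * (1 - ε) = (1 - ε) ^ ((1 - ε) / ε + 1) := by
      rw [Real.rpow_add h1ε, Real.rpow_one]
    rw [this]
    apply Real.rpow_lt_one (le_of_lt h1ε) (by linarith)
    positivity
  have hp1 : pε < 1 := by
    rw [div_lt_one hden]; nlinarith
  refine ⟨⟨hp0.le, hp1.le⟩, ?_⟩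
  -- key point values
  have hx : pε * ε = ε * γ / (1 + ε * γ) := by
    unfold pε; ring
  have h1x : 1 - pε * ε = 1 / (1 + ε * γ) := by
    rw [hx]; field_simp; ring
  set g : ℝ → ℝ := fun p => Real.binEntropy (p * ε) - p * Real.binEntropy ε with hg
  -- derivative of g
  have hderiv : ∀ p ∈ Ioo (0:ℝ) 1, HasDerivAt g
      (ε * (Real.log (1 - p * ε) - Real.log (p * ε)) - Real.binEntropy ε) p := by
    intro p hp
    have hpε0 : p * ε ≠ 0 := (mul_pos hp.1 hε0).ne'
    have hpε1 : p * ε ≠ 1 := by nlinarith [hp.1, hp.2]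
    have h1 : HasDerivAt (fun p : ℝ => Real.binEntropy (p * ε))
        ((Real.log (1 - p * ε) - Real.log (p * ε)) * ε) p := by
      have := (Real.hasDerivAt_binEntropy hpε0 hpε1).comp p
        ((hasDerivAt_id p).mul_const ε)
      simpa [Function.comp_def] using this
    have h2 : HasDerivAt (fun p : ℝ => p * Real.binEntropy ε) (Real.binEntropy ε) p := by
      simpa using (hasDerivAt_id p).mul_const (Real.binEntropy ε)
    have := h1.sub h2
    exact this.congr_deriv (by ring)
  -- derivative vanishes at pε
  have hlogγ : Real.log γ = (1 - ε) / ε * Real.log (1 - ε) := Real.log_rpow h1ε _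
  have hBε : Real.binEntropy ε = -(ε * Real.log ε) - (1 - ε) * Real.log (1 - ε) := by
    unfold Real.binEntropy
    rw [Real.log_inv, Real.log_inv]; ring
  have hzero : ε * (Real.log (1 - pε * ε) - Real.log (pε * ε)) - Real.binEntropy ε = 0 := by
    rw [h1x, hx, Real.log_div one_ne_zero hden.ne', Real.log_div (by positivity) hden.ne',
      Real.log_mul hε0.ne' hγ.ne', Real.log_one, hlogγ, hBε]
    field_simp
    ring
  have gcont : ContinuousOn g (Icc (0:ℝ) 1) := by
    apply Continuous.continuousOn
    fun_prop
  -- sign of derivative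
  have hmono : MonotoneOn g (Icc (0:ℝ) pε) := by
    apply (strictMonoOn_of_deriv_pos (convex_Icc _ _)
      (gcont.mono (Icc_subset_Icc le_rfl hp1.le)) ?_).monotoneOn
    intro p hp
    rw [interior_Icc] at hp
    have hp' : p ∈ Ioo (0:ℝ) 1 := ⟨hp.1, hp.2.trans hp1⟩
    rw [(hderiv p hp').deriv]
    have hlt1 : Real.log (p * ε) < Real.log (pε * ε) :=
      Real.log_lt_log (mul_pos hp.1 hε0) (by nlinarith [hp.1, hp.2])
    have hlt2 : Real.log (1 - pε * ε) < Real.log (1 - p * ε) := by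
      apply Real.log_lt_log
      · rw [h1x]; positivity
      · nlinarith [hp.2]
    nlinarith [hzero]
  have hanti : AntitoneOn g (Icc pε 1) := by
    apply (strictAntiOn_of_deriv_neg (convex_Icc _ _)
      (gcont.mono (Icc_subset_Icc hp0.le le_rfl)) ?_).antitoneOn
    intro p hp
    rw [interior_Icc] at hp
    have hp' : p ∈ Ioo (0:ℝ) 1 := ⟨hp0.trans hp.1, hp.2⟩
    rw [(hderiv p hp').deriv]
    have hlt1 : Real.log (pε * ε) < Real.log (p * ε) :=
      Real.log_lt_log (mul_pos hp0 hε0) (by nlinarith [hp.1])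
    have hlt2 : Real.log (1 - p * ε) < Real.log (1 - pε * ε) := by
      apply Real.log_lt_log
      · nlinarith [hp.2]
      · nlinarith [hp.1]
    nlinarith [hzero]
  -- conclude
  rw [isMaxOn_iff]
  intro x hx'
  have hgx : g x ≤ g pε := by
    rcases le_total x pε with h | h
    · exact hmono ⟨hx'.1, h⟩ ⟨hp0.le, le_rfl⟩ h
    · exact hanti ⟨le_rfl, hp1.le⟩ ⟨h, hx'.2⟩ h
  simp only [H2_eq]
  have hlog2 : (0:ℝ) < Real.log 2 := Real.log_pos one_lt_two
  have : g x / Real.log 2 ≤ g pε / Real.log 2 := by gcongr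
  · calc Real.binEntropy (x * ε) / Real.log 2 - x * (Real.binEntropy ε / Real.log 2)
        = g x / Real.log 2 := by unfold g; ring
      _ ≤ g pε / Real.log 2 := this
      _ = Real.binEntropy (pε * ε) / Real.log 2 - pε * (Real.binEntropy ε / Real.log 2) := by
          unfold g; ring
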